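/- For all b, b′ ∈ H the following identity holds in H: Q¹(X¹p¹₁▷b)·S(Q²)·q¹(X²p¹₂▷b′)·S(q²)·X³p² = q¹(x¹▷b)·S(q²)·x²b′S(x³), where Q¹⊗Q² denotes a second copy of q and Δ(p¹) = p¹₁⊗p¹₂. (This is the computation identifying the reconstructed transmuted multiplication of the braided group H̲ with the closed formula b ·̲ b′ = q¹(x¹▷b)S(q²)x²b′S(x³).) -/

import Mathlib

/-!
Write `E(c) = q¹ c S(q²)` and, for a linear map `g : H ⊗ H → H`, contract an element of `H^{⊗4}`
by `u ⊗ v ⊗ w ⊗ t ↦ g(u ⊗ v) · w β S(t)`. For `g(u ⊗ v) = E(u ▷ b) E(v ▷ b')` the left-hand side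
is the contraction of `(φ ⊗ 1)(Δ ⊗ id ⊗ id)(φ⁻¹)`. By the pentagon axiom this element equals
`(id ⊗ Δ ⊗ id)(φ⁻¹)(1 ⊗ φ⁻¹)(id ⊗ id ⊗ Δ)(φ)`, and the last factor is invisible to the contraction
since `h₁ β S(h₂) = ε(h) β` and `(id ⊗ id ⊗ ε)(φ) = 1`. The contraction of the remaining product
is evaluated with the intertwining property `E(h₁ ▷ c) h₂ = h E(c)`, a consequence of
quasi-coassociativity, and with `E(x¹ ▷ c) x² β S(x³) = c`, which follows from the same pentagon
argument applied to `g(u ⊗ v) = u c S(v) α`.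
-/

open scoped TensorProduct
open TensorProduct

structure QuasiHopf (k H : Type) [Field k] [Ring H] [Algebra k H] where
  comul : H →ₐ[k] H ⊗[k] H
  counit : H →ₐ[k] k
  counit_left : ∀ h : H,
    (TensorProduct.lid k H) ((TensorProduct.map counit.toLinearMap (LinearMap.id : H →ₗ[k] H)) (comul h)) = h
  counit_right : ∀ h : H,
    (TensorProduct.rid k H) ((TensorProduct.map (LinearMap.id : H →ₗ[k] H) counit.toLinearMap) (comul h)) = h
  phi : H ⊗[k] (H ⊗[k] H)
  phiInv : H ⊗[k] (H ⊗[k] H)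
  phi_inv : phi * phiInv = 1
  inv_phi : phiInv * phi = 1
  quasi_coassoc : ∀ h : H,
    (TensorProduct.map (LinearMap.id : H →ₗ[k] H) comul.toLinearMap) (comul h)
      = phi * ((TensorProduct.assoc k H H H)
          ((TensorProduct.map comul.toLinearMap (LinearMap.id : H →ₗ[k] H)) (comul h))) * phiInv
  pentagon :
    ((1 : H) ⊗ₜ[k] phi)
      * ((TensorProduct.map (LinearMap.id : H →ₗ[k] H)
            ((TensorProduct.assoc k H H H).toLinearMap ∘ₗ
              TensorProduct.map comul.toLinearMap (LinearMap.id : H →ₗ[k] H))) phi)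
      * ((TensorProduct.map (LinearMap.id : H →ₗ[k] H) (TensorProduct.assoc k H H H).toLinearMap)
            ((TensorProduct.assoc k H (H ⊗[k] H) H) (phi ⊗ₜ[k] (1 : H))))
    = ((TensorProduct.map (LinearMap.id : H →ₗ[k] H)
          (TensorProduct.map (LinearMap.id : H →ₗ[k] H) comul.toLinearMap)) phi)
      * ((TensorProduct.assoc k H H (H ⊗[k] H))
          ((TensorProduct.map comul.toLinearMap (LinearMap.id : H ⊗[k] H →ₗ[k] H ⊗[k] H)) phi))
  counit_phi :
    (TensorProduct.map (LinearMap.id : H →ₗ[k] H)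
        ((TensorProduct.lid k H).toLinearMap ∘ₗ
          TensorProduct.map counit.toLinearMap (LinearMap.id : H →ₗ[k] H))) phi = 1
  S : H →ₗ[k] H
  Sinv : H →ₗ[k] H
  S_mul : ∀ a b : H, S (a * b) = S b * S a
  S_one : S 1 = 1
  S_Sinv : ∀ h : H, S (Sinv h) = h
  Sinv_S : ∀ h : H, Sinv (S h) = h
  alpha : H
  beta : H
  antipode_left : ∀ (h : H) (n : ℕ) (h1 h2 : Fin n → H),
    comul h = ∑ i, h1 i ⊗ₜ[k] h2 i → ∑ i, S (h1 i) * alpha * h2 i = counit h • alpha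
  antipode_right : ∀ (h : H) (n : ℕ) (h1 h2 : Fin n → H),
    comul h = ∑ i, h1 i ⊗ₜ[k] h2 i → ∑ i, h1 i * beta * S (h2 i) = counit h • beta
  antipode_phi : ∀ (n : ℕ) (X1 X2 X3 : Fin n → H),
    phi = ∑ i, X1 i ⊗ₜ[k] (X2 i ⊗ₜ[k] X3 i) →
      ∑ i, X1 i * beta * S (X2 i) * alpha * X3 i = 1
  antipode_phiInv : ∀ (n : ℕ) (x1 x2 x3 : Fin n → H),
    phiInv = ∑ i, x1 i ⊗ₜ[k] (x2 i ⊗ₜ[k] x3 i) →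
      ∑ i, S (x1 i) * alpha * x2 i * beta * S (x3 i) = 1

theorem TensorProduct.exists_fin_sum_tmul {R M N : Type*} [CommSemiring R] [AddCommMonoid M]
    [AddCommMonoid N] [Module R M] [Module R N] (x : M ⊗[R] N) :
    ∃ (n : ℕ) (f : Fin n → M) (g : Fin n → N), x = ∑ i, f i ⊗ₜ[R] g i := by
  obtain ⟨s, rfl⟩ := TensorProduct.exists_finset x
  refine ⟨s.card, fun i => (s.equivFin.symm i).1.1, fun i => (s.equivFin.symm i).1.2, ?_⟩
  rw [← Finset.sum_attach s]
  exact (Equiv.sum_comp s.equivFin.symm fun p => (p : M × N).1 ⊗ₜ[R] (p : M × N).2).symm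

theorem TensorProduct.exists_fin_sum_tmul_tmul {R M N P : Type*} [CommSemiring R]
    [AddCommMonoid M] [AddCommMonoid N] [AddCommMonoid P] [Module R M] [Module R N] [Module R P]
    (x : M ⊗[R] (N ⊗[R] P)) :
    ∃ (n : ℕ) (f : Fin n → M) (g : Fin n → N) (h : Fin n → P),
      x = ∑ i, f i ⊗ₜ[R] (g i ⊗ₜ[R] h i) := by
  induction x using TensorProduct.induction_on with
  | zero => exact ⟨0, Fin.elim0, Fin.elim0, Fin.elim0, by simp⟩
  | tmul m y =>
    obtain ⟨n, g, h, rfl⟩ := exists_fin_sum_tmul y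
    exact ⟨n, fun _ => m, g, h, by simp [tmul_sum]⟩
  | add x y hx hy =>
    obtain ⟨n, f, g, h, rfl⟩ := hx
    obtain ⟨n', f', g', h', rfl⟩ := hy
    exact ⟨n + n', Fin.append f f', Fin.append g g', Fin.append h h', by simp [Fin.sum_univ_add]⟩

namespace QuasiHopf

open Algebra.TensorProduct (includeLeft includeRight)

variable {k H : Type} [Field k] [Ring H] [Algebra k H] (Q : QuasiHopf k H)

noncomputable def comulLeft : H ⊗[k] H →ₐ[k] H ⊗[k] (H ⊗[k] H) :=
  (Algebra.TensorProduct.assoc k k k H H H).toAlgHom.comp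
    (Algebra.TensorProduct.map Q.comul (AlgHom.id k H))

noncomputable def comulRight : H ⊗[k] H →ₐ[k] H ⊗[k] (H ⊗[k] H) :=
  Algebra.TensorProduct.map (AlgHom.id k H) Q.comul

noncomputable def comul₁ : H ⊗[k] (H ⊗[k] H) →ₐ[k] H ⊗[k] (H ⊗[k] (H ⊗[k] H)) :=
  (Algebra.TensorProduct.assoc k k k H H (H ⊗[k] H)).toAlgHom.comp
    (Algebra.TensorProduct.map Q.comul (AlgHom.id k (H ⊗[k] H)))

noncomputable def comul₂ : H ⊗[k] (H ⊗[k] H) →ₐ[k] H ⊗[k] (H ⊗[k] (H ⊗[k] H)) :=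
  Algebra.TensorProduct.map (AlgHom.id k H) Q.comulLeft

noncomputable def comul₃ : H ⊗[k] (H ⊗[k] H) →ₐ[k] H ⊗[k] (H ⊗[k] (H ⊗[k] H)) :=
  Algebra.TensorProduct.map (AlgHom.id k H) Q.comulRight

noncomputable def counitLeft : H ⊗[k] H →ₐ[k] H :=
  (Algebra.TensorProduct.lid k H).toAlgHom.comp
    (Algebra.TensorProduct.map Q.counit (AlgHom.id k H))

noncomputable def counitRight : H ⊗[k] H →ₐ[k] H :=
  (Algebra.TensorProduct.rid k k H).toAlgHom.comp
    (Algebra.TensorProduct.map (AlgHom.id k H) Q.counit)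

noncomputable def counit₂ : H ⊗[k] (H ⊗[k] H) →ₐ[k] H ⊗[k] H :=
  Algebra.TensorProduct.map (AlgHom.id k H) Q.counitLeft

noncomputable def counit₃ : H ⊗[k] (H ⊗[k] H) →ₐ[k] H ⊗[k] H :=
  Algebra.TensorProduct.map (AlgHom.id k H) Q.counitRight

variable (k H) in
noncomputable def tmulOne : H ⊗[k] (H ⊗[k] H) →ₐ[k] H ⊗[k] (H ⊗[k] (H ⊗[k] H)) :=
  Algebra.TensorProduct.map (AlgHom.id k H) (Algebra.TensorProduct.map (AlgHom.id k H) includeLeft)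

@[simp] theorem comulLeft_tmul (u w : H) :
    Q.comulLeft (u ⊗ₜ w) = TensorProduct.assoc k H H H (Q.comul u ⊗ₜ w) :=
  rfl

theorem comulRight_comul_mul_phi (h : H) :
    Q.comulRight (Q.comul h) * Q.phi = Q.phi * Q.comulLeft (Q.comul h) := by
  have hR : TensorProduct.map LinearMap.id Q.comul.toLinearMap = Q.comulRight.toLinearMap := by
    ext; rfl
  have hL : (TensorProduct.assoc k H H H).toLinearMap ∘ₗ
      TensorProduct.map Q.comul.toLinearMap LinearMap.id = Q.comulLeft.toLinearMap := by
    ext; rfl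
  have hq : Q.comulRight (Q.comul h) = Q.phi * Q.comulLeft (Q.comul h) * Q.phiInv := by
    simpa [hR] using LinearMap.congr_fun hL (Q.comul h) ▸ Q.quasi_coassoc h
  rw [hq, mul_assoc, Q.inv_phi, mul_one]

theorem pentagon_algHom :
    includeRight Q.phi * Q.comul₂ Q.phi * tmulOne k H Q.phi = Q.comul₃ Q.phi * Q.comul₁ Q.phi := by
  have h₂ : TensorProduct.map LinearMap.id ((TensorProduct.assoc k H H H).toLinearMap ∘ₗ
      TensorProduct.map Q.comul.toLinearMap LinearMap.id) = Q.comul₂.toLinearMap := by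
    ext; rfl
  have h₃ : TensorProduct.map LinearMap.id (TensorProduct.map LinearMap.id Q.comul.toLinearMap) =
      Q.comul₃.toLinearMap := by
    ext; rfl
  have h₁ : (TensorProduct.assoc k H H (H ⊗[k] H)).toLinearMap ∘ₗ
      TensorProduct.map Q.comul.toLinearMap LinearMap.id = Q.comul₁.toLinearMap := by
    ext; rfl
  have hOne : TensorProduct.map LinearMap.id (TensorProduct.assoc k H H H).toLinearMap ∘ₗ
      (TensorProduct.assoc k H (H ⊗[k] H) H).toLinearMap ∘ₗ (TensorProduct.mk k _ H).flip 1 =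
        (tmulOne k H).toLinearMap := by
    ext; rfl
  have e₁ := LinearMap.congr_fun h₁ Q.phi
  have e₀ := LinearMap.congr_fun hOne Q.phi
  simp only [LinearMap.comp_apply, LinearEquiv.coe_coe, LinearMap.flip_apply,
    TensorProduct.mk_apply] at e₁ e₀
  simpa [h₂, h₃, e₁, e₀] using Q.pentagon

theorem counit₂_phi : Q.counit₂ Q.phi = 1 := by
  have h : TensorProduct.map LinearMap.id ((TensorProduct.lid k H).toLinearMap ∘ₗ
      TensorProduct.map Q.counit.toLinearMap LinearMap.id) = Q.counit₂.toLinearMap := by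
    ext; rfl
  simpa [h] using Q.counit_phi

theorem counit₂_phiInv : Q.counit₂ Q.phiInv = 1 := by
  simpa [Q.counit₂_phi] using congrArg Q.counit₂ Q.phi_inv

theorem counitLeft_comul (h : H) : Q.counitLeft (Q.comul h) = h :=
  Q.counit_left h

theorem counitRight_comul (h : H) : Q.counitRight (Q.comul h) = h :=
  Q.counit_right h

theorem counit₂_comp_comulLeft : Q.counit₂.comp Q.comulLeft = AlgHom.id k (H ⊗[k] H) := by
  have key (x : H ⊗[k] H) (w : H) :
      Q.counit₂ (TensorProduct.assoc k H H H (x ⊗ₜ w)) = Q.counitRight x ⊗ₜ w := by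
    induction x using TensorProduct.induction_on with
    | zero => simp
    | tmul a b => simp [counit₂, counitLeft, counitRight, TensorProduct.smul_tmul]
    | add x y hx hy => simp [TensorProduct.add_tmul, hx, hy]
  apply AlgHom.toLinearMap_injective
  ext v w
  simp [key, counitRight_comul]

theorem counit₂_comp_comulRight : Q.counit₂.comp Q.comulRight = AlgHom.id k (H ⊗[k] H) := by
  apply AlgHom.toLinearMap_injective
  ext v w
  change v ⊗ₜ Q.counitLeft (Q.comul w) = v ⊗ₜ w
  rw [counitLeft_comul]

theorem map_counit₂_comul₁ (t : H ⊗[k] (H ⊗[k] H)) :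
    Algebra.TensorProduct.map (AlgHom.id k H) Q.counit₂ (Q.comul₁ t) =
      Q.comulLeft (Q.counit₂ t) := by
  suffices (Algebra.TensorProduct.map (AlgHom.id k H) Q.counit₂).comp Q.comul₁ =
      Q.comulLeft.comp Q.counit₂ from DFunLike.congr_fun this t
  apply AlgHom.toLinearMap_injective
  ext u v w
  change Algebra.TensorProduct.map (AlgHom.id k H) Q.counit₂
      (TensorProduct.assoc k H H (H ⊗[k] H) (Q.comul u ⊗ₜ (v ⊗ₜ w))) =
    TensorProduct.assoc k H H H (Q.comul u ⊗ₜ (Q.counit v • w))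
  induction Q.comul u using TensorProduct.induction_on with
  | zero => simp
  | tmul a b => rfl
  | add x y hx hy => simp only [TensorProduct.add_tmul, map_add, hx, hy]

theorem map_counit₂_comul₂ (t : H ⊗[k] (H ⊗[k] H)) :
    Algebra.TensorProduct.map (AlgHom.id k H) Q.counit₂ (Q.comul₂ t) = t := by
  rw [comul₂, ← AlgHom.comp_apply, ← Algebra.TensorProduct.map_comp, counit₂_comp_comulLeft,
    AlgHom.comp_id, Algebra.TensorProduct.map_id, AlgHom.id_apply]

theorem map_counit₂_comul₃ (t : H ⊗[k] (H ⊗[k] H)) :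
    Algebra.TensorProduct.map (AlgHom.id k H) Q.counit₂ (Q.comul₃ t) = t := by
  rw [comul₃, ← AlgHom.comp_apply, ← Algebra.TensorProduct.map_comp, counit₂_comp_comulRight,
    AlgHom.comp_id, Algebra.TensorProduct.map_id, AlgHom.id_apply]

theorem map_counit₂_tmulOne (t : H ⊗[k] (H ⊗[k] H)) :
    Algebra.TensorProduct.map (AlgHom.id k H) Q.counit₂ (tmulOne k H t) =
      Algebra.TensorProduct.map (AlgHom.id k H) includeLeft (Q.counit₃ t) := by
  suffices (Algebra.TensorProduct.map (AlgHom.id k H) Q.counit₂).comp (tmulOne k H) =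
      (Algebra.TensorProduct.map (AlgHom.id k H) includeLeft).comp Q.counit₃ from
    DFunLike.congr_fun this t
  apply AlgHom.toLinearMap_injective
  ext u v w
  simp [tmulOne, counit₃, counit₂, counitLeft, counitRight]

theorem counit₃_map_includeLeft (s : H ⊗[k] H) :
    Q.counit₃ (Algebra.TensorProduct.map (AlgHom.id k H) includeLeft s) = s := by
  suffices Q.counit₃.comp (Algebra.TensorProduct.map (AlgHom.id k H) includeLeft) =
      AlgHom.id k _ from DFunLike.congr_fun this s
  apply AlgHom.toLinearMap_injective
  ext u v
  simp [counit₃, counitRight]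

theorem counit₃_phi : Q.counit₃ Q.phi = 1 := by
  -- `ε` on the third leg turns the pentagon equation into `φ · (counit₃ φ ⊗ 1) = φ`.
  have h := congrArg (Algebra.TensorProduct.map (AlgHom.id k H) Q.counit₂) Q.pentagon_algHom
  simp only [map_mul, Algebra.TensorProduct.includeRight_apply, Algebra.TensorProduct.map_tmul,
    map_counit₂_comul₁, map_counit₂_comul₂, map_counit₂_comul₃, map_counit₂_tmulOne,
    Q.counit₂_phi, map_one, mul_one] at h
  have h₁ : Algebra.TensorProduct.map (AlgHom.id k H) (includeLeft : H →ₐ[k] H ⊗[k] H)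
      (Q.counit₃ Q.phi) = 1 := by
    simpa [← mul_assoc, Q.inv_phi, ← Algebra.TensorProduct.one_def] using
      congrArg (Q.phiInv * ·) h
  simpa [counit₃_map_includeLeft] using congrArg Q.counit₃ h₁

theorem sum_counit_smul_tmul_of_phi {n : ℕ} {X1 X2 X3 : Fin n → H}
    (hX : Q.phi = ∑ i, X1 i ⊗ₜ[k] (X2 i ⊗ₜ[k] X3 i)) :
    ∑ i, Q.counit (X3 i) • (X1 i ⊗ₜ[k] X2 i) = 1 := by
  rw [← Q.counit₃_phi, hX, map_sum]
  simp [counit₃, counitRight, TensorProduct.tmul_smul]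

theorem sum_counit_smul_tmul_of_phiInv {n : ℕ} {x1 x2 x3 : Fin n → H}
    (hx : Q.phiInv = ∑ i, x1 i ⊗ₜ[k] (x2 i ⊗ₜ[k] x3 i)) :
    ∑ i, Q.counit (x2 i) • (x1 i ⊗ₜ[k] x3 i) = 1 := by
  rw [← Q.counit₂_phiInv, hx, map_sum]
  simp [counit₂, counitLeft, TensorProduct.tmul_smul]

theorem map_phiInv_mul_map_phi {B : Type} [Semiring B] [Algebra k B]
    (F : H ⊗[k] (H ⊗[k] H) →ₐ[k] B) : F Q.phiInv * F Q.phi = 1 := by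
  rw [← map_mul, Q.inv_phi, map_one]

theorem map_phi_mul_map_phiInv {B : Type} [Semiring B] [Algebra k B]
    (F : H ⊗[k] (H ⊗[k] H) →ₐ[k] B) : F Q.phi * F Q.phiInv = 1 := by
  rw [← map_mul, Q.phi_inv, map_one]

noncomputable def pentagonLeft : H ⊗[k] (H ⊗[k] (H ⊗[k] H)) :=
  tmulOne k H Q.phi * Q.comul₁ Q.phiInv

noncomputable def pentagonRight : H ⊗[k] (H ⊗[k] (H ⊗[k] H)) :=
  Q.comul₂ Q.phiInv * includeRight Q.phiInv

theorem pentagonLeft_eq : Q.pentagonLeft = Q.pentagonRight * Q.comul₃ Q.phi := by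
  calc Q.pentagonLeft
      = Q.comul₂ Q.phiInv * (includeRight Q.phiInv *
          (includeRight Q.phi * Q.comul₂ Q.phi * tmulOne k H Q.phi)) * Q.comul₁ Q.phiInv := by
        simp only [pentagonLeft, ← mul_assoc, Q.map_phiInv_mul_map_phi, one_mul]
    _ = Q.pentagonRight * Q.comul₃ Q.phi := by
        rw [pentagon_algHom, pentagonRight]
        simp only [← mul_assoc]
        rw [mul_assoc _ (Q.comul₁ Q.phi), Q.map_phi_mul_map_phiInv, mul_one]

noncomputable def sandwich (c : H) : H ⊗[k] H →ₗ[k] H :=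
  LinearMap.mul' k H ∘ₗ TensorProduct.map (LinearMap.mulRight k c) Q.S

@[simp] theorem sandwich_tmul (c u w : H) : Q.sandwich c (u ⊗ₜ w) = u * c * Q.S w :=
  rfl

/-- `Q.adAct c h = h ▷ c`. -/
noncomputable def adAct (c : H) : H →ₗ[k] H :=
  Q.sandwich c ∘ₗ Q.comul.toLinearMap

theorem adAct_eq_sum (c : H) {h : H} {n : ℕ} {h1 h2 : Fin n → H}
    (hh : Q.comul h = ∑ i, h1 i ⊗ₜ[k] h2 i) : Q.adAct c h = ∑ i, h1 i * c * Q.S (h2 i) := by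
  simp [adAct, hh]

theorem adAct_mul (c u v : H) : Q.adAct c (u * v) = Q.adAct (Q.adAct c v) u := by
  obtain ⟨n, f, g, hu⟩ := TensorProduct.exists_fin_sum_tmul (Q.comul u)
  obtain ⟨m, f', g', hv⟩ := TensorProduct.exists_fin_sum_tmul (Q.comul v)
  have huv : Q.comul (u * v) = ∑ i, ∑ j, (f i * f' j) ⊗ₜ[k] (g i * g' j) := by
    simp [hu, hv, Finset.sum_mul_sum]
  rw [Q.adAct_eq_sum c hv, Q.adAct_eq_sum _ hu]
  simp [adAct, huv, Finset.mul_sum, Finset.sum_mul, Q.S_mul, mul_assoc]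

noncomputable def betaS : H ⊗[k] H →ₗ[k] H :=
  LinearMap.mul' k H ∘ₗ TensorProduct.map (LinearMap.mulRight k Q.beta) Q.S

@[simp] theorem betaS_tmul (w t : H) : Q.betaS (w ⊗ₜ t) = w * Q.beta * Q.S t :=
  rfl

theorem betaS_mul_comul (w t h : H) :
    Q.betaS ((w ⊗ₜ t) * Q.comul h) = Q.counit h • (w * Q.beta * Q.S t) := by
  obtain ⟨n, f, g, hh⟩ := TensorProduct.exists_fin_sum_tmul (Q.comul h)
  calc Q.betaS ((w ⊗ₜ t) * Q.comul h) = w * (∑ i, f i * Q.beta * Q.S (g i)) * Q.S t := by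
        simp [hh, Finset.mul_sum, Finset.sum_mul, Q.S_mul, mul_assoc]
    _ = Q.counit h • (w * Q.beta * Q.S t) := by
        rw [Q.antipode_right h n f g hh, mul_smul_comm, smul_mul_assoc, mul_assoc]

noncomputable def conjAlpha (c : H) : H ⊗[k] (H ⊗[k] H) →ₗ[k] H :=
  LinearMap.mul' k H ∘ₗ TensorProduct.map (LinearMap.mulRight k c)
    (LinearMap.mul' k H ∘ₗ TensorProduct.map (LinearMap.mulRight k Q.alpha ∘ₗ Q.S) LinearMap.id)

@[simp] theorem conjAlpha_tmul (c u v w : H) :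
    Q.conjAlpha c (u ⊗ₜ (v ⊗ₜ w)) = u * c * (Q.S v * Q.alpha * w) :=
  rfl

/-- `q¹ c S(q²)`, where `S(q²) = S(X²) α X³`. -/
noncomputable def qConj : H →ₗ[k] H where
  toFun c := Q.conjAlpha c Q.phi
  map_add' c c' := by
    obtain ⟨n, X1, X2, X3, hX⟩ := TensorProduct.exists_fin_sum_tmul_tmul Q.phi
    simp [hX, mul_add, add_mul, Finset.sum_add_distrib]
  map_smul' r c := by
    obtain ⟨n, X1, X2, X3, hX⟩ := TensorProduct.exists_fin_sum_tmul_tmul Q.phi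
    simp [hX, Finset.smul_sum]

theorem qConj_apply (c : H) : Q.qConj c = Q.conjAlpha c Q.phi :=
  rfl

theorem qConj_eq_sum {n : ℕ} {X1 X2 X3 : Fin n → H}
    (hX : Q.phi = ∑ i, X1 i ⊗ₜ[k] (X2 i ⊗ₜ[k] X3 i)) (c : H) :
    Q.qConj c = ∑ i, X1 i * c * (Q.S (X2 i) * Q.alpha * X3 i) := by
  simp [qConj_apply, hX]

theorem conjAlpha_phi_mul_comulLeft (c u w : H) :
    Q.conjAlpha c (Q.phi * Q.comulLeft (u ⊗ₜ w)) = Q.qConj (Q.adAct c u) * w := by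
  obtain ⟨n, X1, X2, X3, hX⟩ := TensorProduct.exists_fin_sum_tmul_tmul Q.phi
  obtain ⟨m, f, g, hu⟩ := TensorProduct.exists_fin_sum_tmul (Q.comul u)
  rw [comulLeft_tmul, hu, Q.qConj_eq_sum hX, Q.adAct_eq_sum c hu, hX]
  simp [TensorProduct.sum_tmul, Finset.mul_sum, Finset.sum_mul, Q.S_mul, mul_assoc]
  exact Finset.sum_comm

theorem conjAlpha_comulRight_mul_phi (c u w : H) :
    Q.conjAlpha c (Q.comulRight (u ⊗ₜ w) * Q.phi) = Q.counit w • (u * Q.qConj c) := by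
  obtain ⟨n, X1, X2, X3, hX⟩ := TensorProduct.exists_fin_sum_tmul_tmul Q.phi
  obtain ⟨m, f, g, hw⟩ := TensorProduct.exists_fin_sum_tmul (Q.comul w)
  have hα (y : H) : ∑ j, Q.S (f j) * (Q.alpha * (g j * y)) = Q.counit w • (Q.alpha * y) := by
    simp only [← mul_assoc, ← Finset.sum_mul, Q.antipode_left w m f g hw, smul_mul_assoc]
  simp [comulRight, Q.qConj_eq_sum hX, hw, hX, Finset.sum_mul, Finset.mul_sum, Finset.smul_sum,
    TensorProduct.tmul_sum, Q.S_mul, mul_assoc]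
  simp only [← Finset.mul_sum, hα, mul_smul_comm]

theorem sum_qConj_adAct_mul {v : H} {n : ℕ} {m1 m2 : Fin n → H}
    (hv : Q.comul v = ∑ i, m1 i ⊗ₜ[k] m2 i) (c : H) :
    ∑ i, Q.qConj (Q.adAct c (m1 i)) * m2 i = v * Q.qConj c := by
  calc ∑ i, Q.qConj (Q.adAct c (m1 i)) * m2 i
      = Q.conjAlpha c (Q.phi * Q.comulLeft (Q.comul v)) := by
        simp only [hv, map_sum, Finset.mul_sum, conjAlpha_phi_mul_comulLeft]
    _ = Q.conjAlpha c (Q.comulRight (Q.comul v) * Q.phi) := by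
        rw [comulRight_comul_mul_phi]
    _ = Q.counitRight (Q.comul v) * Q.qConj c := by
        simp only [hv, map_sum, Finset.sum_mul, conjAlpha_comulRight_mul_phi]
        simp [counitRight]
    _ = v * Q.qConj c := by
        rw [counitRight_comul]

noncomputable def contract (g : H ⊗[k] H →ₗ[k] H) : H ⊗[k] (H ⊗[k] (H ⊗[k] H)) →ₗ[k] H :=
  LinearMap.mul' k H ∘ₗ TensorProduct.map g Q.betaS ∘ₗ
    (TensorProduct.assoc k H H (H ⊗[k] H)).symm.toLinearMap

@[simp] theorem contract_tmul (g : H ⊗[k] H →ₗ[k] H) (u v : H) (y : H ⊗[k] H) :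
    Q.contract g (u ⊗ₜ (v ⊗ₜ y)) = g (u ⊗ₜ v) * Q.betaS y := by
  simp [contract]

theorem contract_mul_comul₃_phi (g : H ⊗[k] H →ₗ[k] H) (A : H ⊗[k] (H ⊗[k] (H ⊗[k] H))) :
    Q.contract g (A * Q.comul₃ Q.phi) = Q.contract g A := by
  suffices Q.contract g ∘ₗ LinearMap.mulRight k (Q.comul₃ Q.phi) = Q.contract g from
    LinearMap.congr_fun this A
  obtain ⟨n, X1, X2, X3, hX⟩ := TensorProduct.exists_fin_sum_tmul_tmul Q.phi
  have hφ : Q.comul₃ Q.phi = ∑ i, X1 i ⊗ₜ (X2 i ⊗ₜ Q.comul (X3 i)) := by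
    simp [hX, comul₃, comulRight]
  ext u v w t
  change Q.contract g ((u ⊗ₜ (v ⊗ₜ (w ⊗ₜ t))) * Q.comul₃ Q.phi) =
    Q.contract g (u ⊗ₜ (v ⊗ₜ (w ⊗ₜ t)))
  calc Q.contract g ((u ⊗ₜ (v ⊗ₜ (w ⊗ₜ t))) * Q.comul₃ Q.phi)
      = g ((u ⊗ₜ v) * ∑ i, Q.counit (X3 i) • (X1 i ⊗ₜ X2 i)) * (w * Q.beta * Q.S t) := by
        simp [hφ, Finset.mul_sum (R := H ⊗[k] (H ⊗[k] (H ⊗[k] H))), Finset.mul_sum,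
          Finset.sum_mul, betaS_mul_comul]
    _ = Q.contract g (u ⊗ₜ (v ⊗ₜ (w ⊗ₜ t))) := by
        rw [Q.sum_counit_smul_tmul_of_phi hX, mul_one, contract_tmul, betaS_tmul]

theorem contract_pentagonLeft (g : H ⊗[k] H →ₗ[k] H) :
    Q.contract g Q.pentagonLeft = Q.contract g Q.pentagonRight := by
  rw [pentagonLeft_eq, contract_mul_comul₃_phi]

theorem contract_pentagonLeft_eq_sum {nX : ℕ} {X1 X2 X3 : Fin nX → H}
    (hX : Q.phi = ∑ i, X1 i ⊗ₜ[k] (X2 i ⊗ₜ[k] X3 i)) {nx : ℕ} {x1 x2 x3 : Fin nx → H}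
    (hx : Q.phiInv = ∑ i, x1 i ⊗ₜ[k] (x2 i ⊗ₜ[k] x3 i)) (g : H ⊗[k] H →ₗ[k] H) :
    Q.contract g Q.pentagonLeft =
      ∑ i, ∑ j, g ((X1 i ⊗ₜ X2 i) * Q.comul (x1 j)) * (X3 i * x2 j * Q.beta * Q.S (x3 j)) := by
  simp only [pentagonLeft, hX, hx, map_sum, Finset.sum_mul (R := H ⊗[k] (H ⊗[k] (H ⊗[k] H))),
    Finset.mul_sum (R := H ⊗[k] (H ⊗[k] (H ⊗[k] H)))]
  refine Finset.sum_congr rfl fun i _ => Finset.sum_congr rfl fun j _ => ?_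
  obtain ⟨m, f, f', hf⟩ := TensorProduct.exists_fin_sum_tmul (Q.comul (x1 j))
  simp [tmulOne, comul₁, hf, TensorProduct.sum_tmul, Finset.mul_sum, Finset.sum_mul, mul_assoc,
    Finset.mul_sum (R := H ⊗[k] (H ⊗[k] (H ⊗[k] H)))]

theorem contract_pentagonRight_eq_sum {nx : ℕ} {x1 x2 x3 : Fin nx → H}
    (hx : Q.phiInv = ∑ i, x1 i ⊗ₜ[k] (x2 i ⊗ₜ[k] x3 i)) (g : H ⊗[k] H →ₗ[k] H)
    (Ψ : H → H → H → H)
    (hΨ : ∀ (u h v : H) (n : ℕ) (h1 h2 : Fin n → H), Q.comul h = ∑ i, h1 i ⊗ₜ[k] h2 i →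
      ∑ i, g (u ⊗ₜ (h1 i * v)) * h2 i = Ψ u h v) :
    Q.contract g Q.pentagonRight =
      ∑ j, ∑ j', Ψ (x1 j) (x2 j) (x1 j') * (x2 j' * Q.beta * Q.S (x3 j') * Q.S (x3 j)) := by
  rw [pentagonRight]
  nth_rewrite 1 [hx]
  simp only [map_sum, Finset.sum_mul (R := H ⊗[k] (H ⊗[k] (H ⊗[k] H)))]
  refine Finset.sum_congr rfl fun j _ => ?_
  obtain ⟨n, h1, h2, hh⟩ := TensorProduct.exists_fin_sum_tmul (Q.comul (x2 j))
  have hterm (j' : Fin nx) : Ψ (x1 j) (x2 j) (x1 j') * (x2 j' * Q.beta * Q.S (x3 j') * Q.S (x3 j)) =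
      ∑ i, g (x1 j ⊗ₜ (h1 i * x1 j')) * (h2 i * x2 j' * Q.beta * Q.S (x3 j * x3 j')) := by
    simp only [← hΨ _ _ _ n h1 h2 hh, Finset.sum_mul, Q.S_mul, mul_assoc]
  simp only [hterm]
  rw [hx]
  simp [comul₂, hh, TensorProduct.sum_tmul, Finset.mul_sum (R := H ⊗[k] (H ⊗[k] (H ⊗[k] H)))]
  simp [Finset.sum_mul, TensorProduct.tmul_sum]

theorem sandwich_tmul_mul_comul (c a b h : H) :
    Q.sandwich c ((a ⊗ₜ b) * Q.comul h) = a * Q.adAct c h * Q.S b := by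
  obtain ⟨n, f, f', hh⟩ := TensorProduct.exists_fin_sum_tmul (Q.comul h)
  simp [hh, Q.adAct_eq_sum c hh, Finset.mul_sum, Finset.sum_mul, Q.S_mul, mul_assoc]

theorem sum_qConj_adAct_mul_p {nx : ℕ} {x1 x2 x3 : Fin nx → H}
    (hx : Q.phiInv = ∑ i, x1 i ⊗ₜ[k] (x2 i ⊗ₜ[k] x3 i)) (c : H) :
    ∑ j, Q.qConj (Q.adAct c (x1 j)) * (x2 j * Q.beta * Q.S (x3 j)) = c := by
  obtain ⟨nX, X1, X2, X3, hX⟩ := TensorProduct.exists_fin_sum_tmul_tmul Q.phi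
  let g := LinearMap.mulRight k Q.alpha ∘ₗ Q.sandwich c
  have hΨ (u h v : H) (n : ℕ) (h1 h2 : Fin n → H) (hh : Q.comul h = ∑ i, h1 i ⊗ₜ[k] h2 i) :
      ∑ i, g (u ⊗ₜ (h1 i * v)) * h2 i = Q.counit h • (u * c * Q.S v * Q.alpha) := by
    calc ∑ i, g (u ⊗ₜ (h1 i * v)) * h2 i
        = u * c * Q.S v * ∑ i, Q.S (h1 i) * Q.alpha * h2 i := by
          simp [g, Finset.mul_sum, Q.S_mul, mul_assoc]
      _ = Q.counit h • (u * c * Q.S v * Q.alpha) := by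
          rw [Q.antipode_left h n h1 h2 hh, mul_smul_comm]
  calc ∑ j, Q.qConj (Q.adAct c (x1 j)) * (x2 j * Q.beta * Q.S (x3 j))
      = Q.contract g Q.pentagonLeft := by
        rw [Q.contract_pentagonLeft_eq_sum hX hx, Finset.sum_comm]
        simp [g, sandwich_tmul_mul_comul, Q.qConj_eq_sum hX, Finset.sum_mul, mul_assoc]
    _ = Q.contract g Q.pentagonRight := Q.contract_pentagonLeft g
    _ = ∑ j, ∑ j', Q.counit (x2 j) • (x1 j * c * Q.S (x1 j') * Q.alpha) *
          (x2 j' * Q.beta * Q.S (x3 j') * Q.S (x3 j)) :=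
        Q.contract_pentagonRight_eq_sum hx g _ hΨ
    _ = Q.sandwich c (∑ j, Q.counit (x2 j) • (x1 j ⊗ₜ x3 j)) := by
        have hS : ∑ j', Q.S (x1 j') * Q.alpha * x2 j' * Q.beta * Q.S (x3 j') = 1 :=
          Q.antipode_phiInv nx x1 x2 x3 hx
        simp only [map_sum, map_smul, sandwich_tmul]
        refine Finset.sum_congr rfl fun j _ => ?_
        calc _ = Q.counit (x2 j) • (x1 j * c *
              (∑ j', Q.S (x1 j') * Q.alpha * x2 j' * Q.beta * Q.S (x3 j')) * Q.S (x3 j)) := by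
              simp [Finset.mul_sum, Finset.sum_mul, Finset.smul_sum, mul_assoc]
          _ = _ := by rw [hS, mul_one]
    _ = c := by
        rw [Q.sum_counit_smul_tmul_of_phiInv hx, Algebra.TensorProduct.one_def, sandwich_tmul,
          Q.S_one, one_mul, mul_one]

theorem contract_qConj_adAct_pentagonRight {nx : ℕ} {x1 x2 x3 : Fin nx → H}
    (hx : Q.phiInv = ∑ i, x1 i ⊗ₜ[k] (x2 i ⊗ₜ[k] x3 i)) (b b' : H) :
    Q.contract (LinearMap.mul' k H ∘ₗ
        TensorProduct.map (Q.qConj ∘ₗ Q.adAct b) (Q.qConj ∘ₗ Q.adAct b')) Q.pentagonRight =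
      ∑ j, Q.qConj (Q.adAct b (x1 j)) * (x2 j * b' * Q.S (x3 j)) := by
  rw [Q.contract_pentagonRight_eq_sum hx _
    (fun u h v => Q.qConj (Q.adAct b u) * (h * Q.qConj (Q.adAct b' v)))]
  · refine Finset.sum_congr rfl fun j _ => ?_
    calc _ = Q.qConj (Q.adAct b (x1 j)) * (x2 j *
          (∑ j', Q.qConj (Q.adAct b' (x1 j')) * (x2 j' * Q.beta * Q.S (x3 j'))) * Q.S (x3 j)) := by
          simp [Finset.mul_sum, Finset.sum_mul, mul_assoc]
      _ = _ := by rw [Q.sum_qConj_adAct_mul_p hx, mul_assoc]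
  · intro u h v n h1 h2 hh
    simp only [LinearMap.comp_apply, TensorProduct.map_tmul, LinearMap.mul'_apply, adAct_mul,
      mul_assoc, ← Finset.mul_sum, Q.sum_qConj_adAct_mul hh]

end QuasiHopf

/-- identification of the reconstructed transmuted multiplication with its
closed formula:
`Q¹(X¹p¹₁ ▷ b) S(Q²) q¹(X²p¹₂ ▷ b′) S(q²) X³p² = q¹(x¹ ▷ b) S(q²) x²b′S(x³)`,
where `q = X¹ ⊗ S⁻¹(αX³)X²`, `p = x¹ ⊗ x²βS(x³)`, `Q¹ ⊗ Q²` is a second copy of `q`, `▷`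
is the left adjoint action, and `Δ(p¹) = p¹₁ ⊗ p¹₂`. -/
theorem stmt3 {k H : Type} [Field k] [Ring H] [Algebra k H] (Q : QuasiHopf k H)
    (ad : H → H → H)
    (had : ∀ (c b : H) (n : ℕ) (c1 c2 : Fin n → H),
      Q.comul c = ∑ i, c1 i ⊗ₜ[k] c2 i → ad c b = ∑ i, c1 i * b * Q.S (c2 i))
    (b b' : H)
    (nX : ℕ) (X1 X2 X3 : Fin nX → H)
    (hX : Q.phi = ∑ i, X1 i ⊗ₜ[k] (X2 i ⊗ₜ[k] X3 i))
    (nx : ℕ) (x1 x2 x3 : Fin nx → H)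
    (hx : Q.phiInv = ∑ i, x1 i ⊗ₜ[k] (x2 i ⊗ₜ[k] x3 i))
    (m : ℕ) (p11 p12 : Fin nx → Fin m → H)
    (hp1 : ∀ j, Q.comul (x1 j) = ∑ jj, p11 j jj ⊗ₜ[k] p12 j jj) :
    ∑ a, ∑ c, ∑ i, ∑ j, ∑ jj,
      X1 a * ad (X1 i * p11 j jj) b * Q.S (Q.Sinv (Q.alpha * X3 a) * X2 a)
        * (X1 c * ad (X2 i * p12 j jj) b' * Q.S (Q.Sinv (Q.alpha * X3 c) * X2 c))
        * (X3 i * (x2 j * Q.beta * Q.S (x3 j)))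
    = ∑ c, ∑ j,
        X1 c * ad (x1 j) b * Q.S (Q.Sinv (Q.alpha * X3 c) * X2 c)
          * (x2 j * b' * Q.S (x3 j)) := by
  have had' (u c : H) : ad u c = Q.adAct c u := by
    obtain ⟨n, f, g, hu⟩ := TensorProduct.exists_fin_sum_tmul (Q.comul u)
    rw [had u c n f g hu, Q.adAct_eq_sum c hu]
  have hS (a c : H) : Q.S (Q.Sinv (Q.alpha * a) * c) = Q.S c * Q.alpha * a := by
    rw [Q.S_mul, Q.S_Sinv, mul_assoc]
  let g := LinearMap.mul' k H ∘ₗ TensorProduct.map (Q.qConj ∘ₗ Q.adAct b) (Q.qConj ∘ₗ Q.adAct b')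
  calc _ = ∑ i, ∑ j, ∑ jj, ∑ a, ∑ c,
          X1 a * Q.adAct b (X1 i * p11 j jj) * (Q.S (X2 a) * Q.alpha * X3 a)
            * (X1 c * Q.adAct b' (X2 i * p12 j jj) * (Q.S (X2 c) * Q.alpha * X3 c))
            * (X3 i * (x2 j * Q.beta * Q.S (x3 j))) := by
        simp only [had', hS]
        rw [Finset.sum_comm_cycle]
        refine Finset.sum_congr rfl fun i _ => ?_
        rw [Finset.sum_comm_cycle]
        exact Finset.sum_congr rfl fun j _ => Finset.sum_comm_cycle
    _ = Q.contract g Q.pentagonLeft := by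
        rw [Q.contract_pentagonLeft_eq_sum hX hx]
        simp [g, hp1, Finset.mul_sum, Finset.sum_mul, Q.qConj_eq_sum hX, mul_assoc]
        exact Finset.sum_congr rfl fun _ _ => Finset.sum_congr rfl fun _ _ =>
          Finset.sum_congr rfl fun _ _ => Finset.sum_comm
    _ = Q.contract g Q.pentagonRight := Q.contract_pentagonLeft g
    _ = ∑ j, Q.qConj (Q.adAct b (x1 j)) * (x2 j * b' * Q.S (x3 j)) :=
        Q.contract_qConj_adAct_pentagonRight hx b b'
    _ = _ := by
        rw [Finset.sum_comm]
        simp [had', hS, Q.qConj_eq_sum hX, Finset.sum_mul, mul_assoc]
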